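/- Let m be an odd integer and let (d, v) ∈ ℤ² with d > 0. Then there is NO decomposition (d, v) = (d₁, v₁) + (d₂, v₂) in ℤ² with d₁, d₂ > 0 satisfying w₁/d₁ = w₂/d₂, where w₁ := v₁ − (m/2)·d₁·d₂ and w₂ := v₂ + (m/2)·d₁·d₂, if and only if either (gcd(d, v) = 1 and d ≢ 2 (mod 4)) or (gcd(d, v) = 2 and d ≡ 2 (mod 4)). -/

import Mathlib

/-! Clearing denominators, the slope condition for `d = d₁ + d₂` reads `2d ∣ d₁ (2v + m d d₂)`.
Modulo `2d` the term `m d d₁ d₂` only sees the parity of `d₁ d₂`, which is that of `d₁ (d - 1)`,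
so the condition becomes `d ∣ d₁ u` with `u = v + m d (d - 1) / 2`. A suitable `0 < d₁ < d`
exists iff `gcd(d, u) ≠ 1`, and for odd `m` this gcd is `gcd(d, v)` when `d` is odd and
`gcd(d, v + d / 2)` when `d` is even, which splits into the two cases of the statement. -/

theorem twisted_slope_eq_iff {m d₁ d₂ v₁ v₂ : ℤ} (hd₁ : d₁ ≠ 0) (hd₂ : d₂ ≠ 0) :
    ((v₁ : ℚ) - m * d₁ * d₂ / 2) / d₁ = ((v₂ : ℚ) + m * d₁ * d₂ / 2) / d₂ ↔
      2 * (d₁ + d₂) * v₁ = d₁ * (2 * (v₁ + v₂) + m * (d₁ + d₂) * d₂) := by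
  rw [div_eq_div_iff (by exact_mod_cast hd₁) (by exact_mod_cast hd₂), ← @Int.cast_inj ℚ]
  push_cast
  constructor
  · intro h
    linear_combination 2 * h
  · intro h
    linear_combination h / 2

theorem exists_decomposition_iff_exists_dvd (m d v : ℤ) :
    (∃ d₁ d₂ v₁ v₂ : ℤ, 0 < d₁ ∧ 0 < d₂ ∧ d₁ + d₂ = d ∧ v₁ + v₂ = v ∧
        ((v₁ : ℚ) - (m : ℚ) * d₁ * d₂ / 2) / d₁ = ((v₂ : ℚ) + (m : ℚ) * d₁ * d₂ / 2) / d₂) ↔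
      ∃ d₁, 0 < d₁ ∧ d₁ < d ∧ 2 * d ∣ d₁ * (2 * v + m * d * (d - d₁)) := by
  constructor
  · rintro ⟨d₁, d₂, v₁, v₂, hd₁, hd₂, rfl, rfl, h⟩
    rw [twisted_slope_eq_iff hd₁.ne' hd₂.ne'] at h
    exact ⟨d₁, hd₁, by omega, v₁, by rw [h]; ring⟩
  · rintro ⟨d₁, hd₁, hd₁d, v₁, h⟩
    refine ⟨d₁, d - d₁, v₁, v - v₁, hd₁, by omega, by ring, by ring, ?_⟩
    rw [twisted_slope_eq_iff hd₁.ne' (by omega)]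
    linear_combination -h

theorem two_mul_dvd_iff_dvd_mul_add_choose_two (m d d₁ v : ℤ) :
    2 * d ∣ d₁ * (2 * v + m * d * (d - d₁)) ↔ d ∣ d₁ * (v + m * (d * (d - 1) / 2)) := by
  obtain ⟨t, ht⟩ := Int.even_mul_pred_self d
  obtain ⟨s, hs⟩ := Int.even_mul_pred_self d₁
  have htd : d * (d - 1) / 2 = t := by omega
  have key : d₁ * (2 * v + m * d * (d - d₁)) = 2 * (d₁ * (v + m * t)) + 2 * d * (-(m * s)) := by
    linear_combination d₁ * m * ht - m * d * hs
  rw [htd, key, dvd_add_left (dvd_mul_right _ _), mul_dvd_mul_iff_left two_ne_zero]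

theorem exists_pos_lt_dvd_mul_iff {d u : ℤ} (hd : 0 < d) :
    (∃ a, 0 < a ∧ a < d ∧ d ∣ a * u) ↔ Int.gcd d u ≠ 1 := by
  constructor
  · rintro ⟨a, ha, had, hdvd⟩ hg
    have := Int.le_of_dvd ha ((Int.isCoprime_iff_gcd_eq_one.mpr hg).dvd_of_dvd_mul_right hdvd)
    omega
  · intro hg
    have hg0 : 0 < Int.gcd d u := Int.gcd_pos_of_ne_zero_left u hd.ne'
    obtain ⟨a, ha⟩ := Int.gcd_dvd_left d u
    obtain ⟨b, hb⟩ := Int.gcd_dvd_right d u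
    have hg2 : (2 : ℤ) ≤ Int.gcd d u := by omega
    have ha0 : 0 < a := pos_of_mul_pos_right (ha ▸ hd) (by positivity)
    refine ⟨a, ha0, by nlinarith, b, ?_⟩
    rw [hb]
    nth_rw 2 [ha]
    ring

theorem gcd_two_mul_add_self_eq_one_iff (c v : ℤ) :
    Int.gcd (2 * c) (v + c) = 1 ↔ Odd (v + c) ∧ IsCoprime c v := by
  rw [← Int.isCoprime_iff_gcd_eq_one, IsCoprime.mul_left_iff, Int.isCoprime_two_left]
  exact and_congr_right fun _ ↦ by
    simpa using IsCoprime.add_mul_left_right_iff (x := c) (y := v) (z := 1)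

theorem gcd_two_mul_eq_two_iff {c v : ℤ} (hc : Odd c) :
    Int.gcd (2 * c) v = 2 ↔ Even v ∧ IsCoprime c v := by
  rcases Int.even_or_odd' v with ⟨w, rfl | rfl⟩
  · have h2c : IsCoprime c 2 := Int.isCoprime_two_right.mpr hc
    rw [Int.gcd_mul_left, IsCoprime.mul_right_iff, Int.isCoprime_iff_gcd_eq_one (n := w)]
    simp [h2c]
  · have hg : ((Int.gcd (2 * c) (2 * w + 1) : ℕ) : ℤ) ∣ 2 * w + 1 := Int.gcd_dvd_right _ _
    constructor
    · intro h
      rw [h] at hg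
      omega
    · rintro ⟨⟨k, hk⟩, -⟩
      omega

theorem gcd_add_mul_choose_two_eq_one_iff {m : ℤ} (hm : Odd m) (d v : ℤ) :
    Int.gcd d (v + m * (d * (d - 1) / 2)) = 1 ↔
      (Int.gcd d v = 1 ∧ d % 4 ≠ 2) ∨ (Int.gcd d v = 2 ∧ d % 4 = 2) := by
  rcases Int.even_or_odd' d with ⟨c, rfl | rfl⟩
  · obtain ⟨k, rfl⟩ := hm
    have hu : v + (2 * k + 1) * (2 * c * (2 * c - 1) / 2) =
        v + c + (c * (2 * k + 1) - k - 1) * (2 * c) := by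
      rw [show 2 * c * (2 * c - 1) = 2 * (c * (2 * c - 1)) by ring,
        Int.mul_ediv_cancel_left _ two_ne_zero]
      ring
    rw [hu, Int.gcd_add_mul_right_right, gcd_two_mul_add_self_eq_one_iff]
    rcases Int.even_or_odd c with hc | hc
    · have h4 : 2 * c % 4 = 0 := by obtain ⟨e, rfl⟩ := hc; omega
      simp [h4, ← Int.isCoprime_iff_gcd_eq_one, IsCoprime.mul_left_iff, Int.isCoprime_two_left,
        Int.odd_add, hc]
    · have h4 : 2 * c % 4 = 2 := by obtain ⟨e, rfl⟩ := hc; omega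
      simp [h4, gcd_two_mul_eq_two_iff hc, Int.odd_add, Int.not_even_iff_odd.mpr hc]
  · have hu : v + m * ((2 * c + 1) * (2 * c + 1 - 1) / 2) = v + m * c * (2 * c + 1) := by
      rw [show (2 * c + 1) * (2 * c + 1 - 1) = 2 * ((2 * c + 1) * c) by ring,
        Int.mul_ediv_cancel_left _ two_ne_zero]
      ring
    have hg : ((Int.gcd (2 * c + 1) v : ℕ) : ℤ) ∣ 2 * c + 1 := Int.gcd_dvd_left _ _
    have hg2 : Int.gcd (2 * c + 1) v ≠ 2 := fun h ↦ by rw [h] at hg; omega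
    have h4 : (2 * c + 1) % 4 ≠ 2 := by omega
    rw [hu, Int.gcd_add_mul_right_right]
    simp [hg2, h4]

/-- Lemma 6.6: for odd `m` and `(d, v) ∈ ℤ²` with `d > 0`, there is no decomposition
`(d, v) = (d₁, v₁) + (d₂, v₂)` with `d₁, d₂ > 0` and `w₁/d₁ = w₂/d₂`
(where `w₁ = v₁ - m d₁ d₂ / 2`, `w₂ = v₂ + m d₁ d₂ / 2` in `ℚ`) iff
either `gcd(d,v) = 1` and `d ≢ 2 (mod 4)`, or `gcd(d,v) = 2` and `d ≡ 2 (mod 4)`. -/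
theorem no_decomposition_iff (m d v : ℤ) (hm : Odd m) (hd : 0 < d) :
    (¬ ∃ d₁ d₂ v₁ v₂ : ℤ, 0 < d₁ ∧ 0 < d₂ ∧ d₁ + d₂ = d ∧ v₁ + v₂ = v ∧
        ((v₁ : ℚ) - (m : ℚ) * d₁ * d₂ / 2) / d₁ = ((v₂ : ℚ) + (m : ℚ) * d₁ * d₂ / 2) / d₂) ↔
      ((Int.gcd d v = 1 ∧ d % 4 ≠ 2) ∨ (Int.gcd d v = 2 ∧ d % 4 = 2)) := by
  rw [exists_decomposition_iff_exists_dvd]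
  simp_rw [two_mul_dvd_iff_dvd_mul_add_choose_two]
  rw [exists_pos_lt_dvd_mul_iff hd, not_not, gcd_add_mul_choose_two_eq_one_iff hm]
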